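/- arXiv:1507.07600 — 4 statements merged into one kernel-verified Lean document; each statement's English description precedes it below -/
import Mathlib

section
/- (Rosenthal-type maximal inequality, classical case.) Let X₁,…,Xₙ be independent real random variables on a probability space with E[Xₖ] = 0 and E[|Xₖ|^p] < ∞ for some p ≥ 2, and let Sₖ = X₁ + ⋯ + Xₖ. Then there is a constant C_p depending only on p such that E[max_{k≤n} |Sₖ|^p] ≤ C_p ( Σ_{k=1}^n E[|Xₖ|^p] + ( Σ_{k=1}^n E[Xₖ²] )^{p/2} ). -/
open MeasureTheory ProbabilityTheory Finset

open scoped ENNReal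

/-!
Stopping the walk `S` at its first passage above `t` splits it into a past and a future that
depend on disjoint blocks of the `X j`, hence are independent. Kolmogorov's maximal inequality
for the future then gives the Hoffmann-Jørgensen type tail bound
`P(max |S| > 3t) ≤ P(max |X| > t) + (Σ E X_j² / t²) P(max |S| > t)`.
Integrating it against `p t ^ (p - 1) dt` above `t ≍ (Σ E X_j²) ^ (1/2)` bounds `E (max |S|) ^ p`
by `3 ^ p E (max |X|) ^ p + O((Σ E X_j²) ^ (p/2))` plus half of itself, and that half is absorbed
since `max |S| ∈ L^p`. Finally `E (max |X|) ^ p ≤ Σ E |X_j| ^ p`.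
-/

lemma ENNReal.le_two_mul_of_le_add_half {L a : ℝ≥0∞} (hL : L ≠ ∞) (h : L ≤ a + L / 2) :
    L ≤ 2 * a := by
  have h' : L / 2 + L / 2 ≤ a + L / 2 := by rwa [ENNReal.add_halves]
  rw [mul_comm, ← ENNReal.div_le_iff two_ne_zero ENNReal.ofNat_ne_top]
  exact ENNReal.le_of_add_le_add_right (ENNReal.div_ne_top hL two_ne_zero) h'

lemma MeasureTheory.MemLp.integrable_abs_rpow {Ω : Type*} {mΩ : MeasurableSpace Ω}
    {μ : Measure Ω} {f : Ω → ℝ} {p : ℝ} (hf : MemLp f (ENNReal.ofReal p) μ) (hp : 0 < p) :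
    Integrable (fun ω => |f ω| ^ p) μ := by
  simpa [ENNReal.toReal_ofReal hp.le] using
    hf.integrable_norm_rpow (by simpa using hp) ENNReal.ofReal_ne_top

namespace ProbabilityTheory

variable {Ω : Type*}

def partialSum (X : ℕ → Ω → ℝ) (i : ℕ) (ω : Ω) : ℝ := ∑ j ∈ range i, X j ω

noncomputable def maxAbsPartialSum (X : ℕ → Ω → ℝ) (n : ℕ) (ω : Ω) : ℝ :=
  ⨆ k : Fin (n + 1), |partialSum X k ω|

noncomputable def maxAbs (X : ℕ → Ω → ℝ) (n : ℕ) (ω : Ω) : ℝ := ⨆ j : Fin n, |X j ω|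

def firstPassage (S : ℕ → Ω → ℝ) (t : ℝ) (k : ℕ) : Set Ω :=
  {ω | (∀ i < k, |S i ω| ≤ t) ∧ t < |S k ω|}

section Deterministic

variable {X : ℕ → Ω → ℝ} {S : ℕ → Ω → ℝ} {t : ℝ}

lemma partialSum_add (X : ℕ → Ω → ℝ) (k i : ℕ) (ω : Ω) :
    partialSum X (k + i) ω = partialSum X k ω + partialSum (fun j => X (k + j)) i ω :=
  sum_range_add _ _ _

lemma sum_range_shift_le {f : ℕ → ℝ} (hf : ∀ j, 0 ≤ f j) {k n : ℕ} (hk : k ≤ n) :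
    ∑ j ∈ range (n - k), f (k + j) ≤ ∑ j ∈ range n, f j := by
  conv_rhs => rw [← Nat.add_sub_cancel' hk, sum_range_add]
  exact le_add_of_nonneg_left (sum_nonneg fun j _ => hf j)

lemma iSup_fin_rpow_le_sum_range {f : ℕ → ℝ} (hf : ∀ i, 0 ≤ f i) {p : ℝ} (hp : 0 < p) (n : ℕ) :
    (⨆ i : Fin n, f i) ^ p ≤ ∑ i ∈ range n, f i ^ p := by
  rcases isEmpty_or_nonempty (Fin n) with hn | hn
  · rw [Real.iSup_of_isEmpty, Real.zero_rpow hp.ne']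
    exact sum_nonneg fun i _ => Real.rpow_nonneg (hf i) p
  · obtain ⟨i, hi⟩ := exists_eq_ciSup_of_finite (f := fun i : Fin n => f i)
    rw [← hi]
    exact single_le_sum (fun i _ => Real.rpow_nonneg (hf i) p) (mem_range.2 i.isLt)

lemma lt_maxAbsPartialSum_iff {n : ℕ} {ω : Ω} :
    t < maxAbsPartialSum X n ω ↔ ∃ i ≤ n, t < |partialSum X i ω| := by
  rw [maxAbsPartialSum, lt_ciSup_iff (Set.finite_range _).bddAbove]
  exact ⟨fun ⟨k, hk⟩ => ⟨k, Nat.lt_succ_iff.1 k.isLt, hk⟩,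
    fun ⟨i, hi, hti⟩ => ⟨⟨i, Nat.lt_succ_of_le hi⟩, hti⟩⟩

lemma maxAbsPartialSum_nonneg (X : ℕ → Ω → ℝ) (n : ℕ) (ω : Ω) : 0 ≤ maxAbsPartialSum X n ω :=
  Real.iSup_nonneg fun _ => abs_nonneg _

lemma abs_le_maxAbs {n j : ℕ} (hj : j < n) (ω : Ω) : |X j ω| ≤ maxAbs X n ω :=
  le_ciSup (f := fun j : Fin n => |X j ω|) (Set.finite_range _).bddAbove ⟨j, hj⟩

lemma maxAbs_nonneg (X : ℕ → Ω → ℝ) (n : ℕ) (ω : Ω) : 0 ≤ maxAbs X n ω :=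
  Real.iSup_nonneg fun _ => abs_nonneg _

lemma pairwise_disjoint_firstPassage : Pairwise (Function.onFun Disjoint (firstPassage S t)) := by
  intro i j hij
  wlog h : i < j generalizing i j
  · exact (this hij.symm (hij.lt_or_gt.resolve_left h)).symm
  exact Set.disjoint_left.2 fun ω hi hj => (hj.1 i h).not_gt hi.2

lemma exists_firstPassage {m : ℕ} {ω : Ω} (h : t < |S m ω|) :
    ∃ k ≤ m, ω ∈ firstPassage S t k := by
  classical
  have hex : ∃ k, t < |S k ω| := ⟨m, h⟩
  refine ⟨Nat.find hex, Nat.find_min' hex h, fun i hi => ?_, Nat.find_spec hex⟩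
  exact not_lt.1 (Nat.find_min hex hi)

lemma setOf_lt_maxAbsPartialSum_eq_biUnion (n : ℕ) :
    {ω | t < maxAbsPartialSum X n ω} = ⋃ k ∈ range (n + 1), firstPassage (partialSum X) t k := by
  ext ω
  simp only [Set.mem_ofPred_eq, lt_maxAbsPartialSum_iff, Set.mem_iUnion, mem_range,
    Nat.lt_succ_iff, exists_prop]
  constructor
  · rintro ⟨i, hi, hti⟩
    obtain ⟨k, hk, hω⟩ := exists_firstPassage hti
    exact ⟨k, hk.trans hi, hω⟩
  · rintro ⟨k, hk, hω⟩
    exact ⟨k, hk, hω.2⟩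

lemma measurableSet_firstPassage {m : MeasurableSpace Ω} {k : ℕ} (hS : ∀ i ≤ k, Measurable (S i)) :
    MeasurableSet (firstPassage S t k) := by
  simp only [firstPassage, Set.ofPred_and, Set.ofPred_forall]
  exact (MeasurableSet.iInter fun i => MeasurableSet.iInter fun hi =>
    measurableSet_le (hS i hi.le).abs measurable_const).inter
    (measurableSet_lt measurable_const (hS k le_rfl).abs)

/-- At the first passage `k` above `t`, `|S k| ≤ |S (k - 1)| + |X (k - 1)| ≤ 2 t`, so reaching
`3 t` later needs an increment of more than `t` after time `k`. -/
lemma exists_firstPassage_of_three_mul_lt {n m : ℕ} {ω : Ω} (ht : 0 ≤ t) (hm : m ≤ n)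
    (hX : ∀ j < n, |X j ω| ≤ t) (h : 3 * t < |partialSum X m ω|) :
    ∃ k ≤ n, ω ∈ firstPassage (partialSum X) t k ∧
      t < maxAbsPartialSum (fun j => X (k + j)) (n - k) ω := by
  obtain ⟨k, hkm, hk⟩ := exists_firstPassage (S := partialSum X) (t := t) (by linarith : t < _)
  obtain ⟨l, rfl⟩ : ∃ l, k = l + 1 := by
    refine Nat.exists_eq_succ_of_ne_zero fun hk0 => ?_
    have := hk.2
    rw [hk0] at this
    simp only [partialSum, range_zero, sum_empty, abs_zero] at this
    linarith
  have hSk : |partialSum X (l + 1) ω| ≤ 2 * t := by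
    rw [show partialSum X (l + 1) ω = partialSum X l ω + X l ω from sum_range_succ _ _]
    linarith [abs_add_le (partialSum X l ω) (X l ω), hk.1 l l.lt_succ_self, hX l (by omega)]
  have hkm' : l + 1 < m := hkm.lt_of_ne fun hkm => by subst hkm; linarith
  refine ⟨l + 1, by omega, hk, lt_maxAbsPartialSum_iff.2 ⟨m - (l + 1), by omega, ?_⟩⟩
  have hsplit := partialSum_add X (l + 1) (m - (l + 1)) ω
  rw [Nat.add_sub_cancel' hkm'.le] at hsplit
  rw [show partialSum _ (m - (l + 1)) ω = partialSum X m ω - partialSum X (l + 1) ω by linarith]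
  linarith [abs_sub_abs_le_abs_sub (partialSum X m ω) (partialSum X (l + 1) ω)]

end Deterministic

section Independence

variable {mΩ : MeasurableSpace Ω} {μ : Measure Ω} {X : ℕ → Ω → ℝ}

abbrev blockSigma (X : ℕ → Ω → ℝ) (s : Set ℕ) : MeasurableSpace Ω :=
  ⨆ j ∈ s, MeasurableSpace.comap (X j) inferInstance

lemma measurable_blockSigma {s : Set ℕ} {j : ℕ} (hj : j ∈ s) : Measurable[blockSigma X s] (X j) :=
  (comap_measurable (X j)).mono
    (le_iSup₂ (f := fun j (_ : j ∈ s) => MeasurableSpace.comap (X j) inferInstance) j hj) le_rfl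

lemma blockSigma_le (hX : ∀ j, Measurable (X j)) (s : Set ℕ) :
    blockSigma X s ≤ mΩ :=
  iSup₂_le fun j _ => (hX j).comap_le

lemma iIndepFun.indep_blockSigma (hX : ∀ j, Measurable (X j)) (hind : iIndepFun X μ)
    {s t : Set ℕ} (hst : Disjoint s t) : Indep (blockSigma X s) (blockSigma X t) μ :=
  indep_iSup_of_disjoint (fun j => (hX j).comap_le) hind.iIndep hst

lemma Indep.indepFun_of_measurable {m₁ m₂ : MeasurableSpace Ω} (h : Indep m₁ m₂ μ)
    {f g : Ω → ℝ} (hf : Measurable[m₁] f) (hg : Measurable[m₂] g) : IndepFun f g μ :=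
  (IndepFun_iff_Indep f g μ).2
    (indep_of_indep_of_le_right (indep_of_indep_of_le_left h hf.comap_le) hg.comap_le)

lemma measurable_partialSum {m : MeasurableSpace Ω} {i : ℕ} (hX : ∀ j < i, Measurable (X j)) :
    Measurable (partialSum X i) :=
  Finset.measurable_sum _ fun j hj => hX j (mem_range.1 hj)

lemma measurable_maxAbsPartialSum {m : MeasurableSpace Ω} {n : ℕ} (hX : ∀ j < n, Measurable (X j)) :
    Measurable (maxAbsPartialSum X n) :=
  Measurable.iSup fun k => (measurable_partialSum fun j hj => hX j (by omega)).abs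

lemma measurable_maxAbs {m : MeasurableSpace Ω} {n : ℕ} (hX : ∀ j, Measurable (X j)) :
    Measurable (maxAbs X n) :=
  Measurable.iSup fun j => (hX j).abs

lemma integral_sq_sum_of_iIndepFun [IsFiniteMeasure μ] (hind : iIndepFun X μ)
    (hL2 : ∀ j, MemLp (X j) 2 μ) (hcent : ∀ j, ∫ ω, X j ω ∂μ = 0) (s : Finset ℕ) :
    ∫ ω, (∑ j ∈ s, X j ω) ^ 2 ∂μ = ∑ j ∈ s, ∫ ω, X j ω ^ 2 ∂μ := by
  have hsum : (∑ j ∈ s, X j) = fun ω => ∑ j ∈ s, X j ω := by ext ω; exact sum_apply ω s X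
  have hvar := IndepFun.variance_sum (s := s) (fun j _ => hL2 j)
    fun i _ j _ hij => hind.indepFun hij
  rw [hsum, variance_of_integral_eq_zero (Finset.aemeasurable_fun_sum _ fun j _ =>
    (hL2 j).aestronglyMeasurable.aemeasurable) ?_] at hvar
  · rw [hvar]
    exact sum_congr rfl fun j _ =>
      variance_of_integral_eq_zero (hL2 j).aestronglyMeasurable.aemeasurable (hcent j)
  · rw [integral_finsetSum _ fun j _ => (hL2 j).integrable one_le_two]
    exact sum_eq_zero fun j _ => hcent j

lemma setIntegral_sq_le_setIntegral_add_sq {m₁ m₂ : MeasurableSpace Ω} (hm₁ : m₁ ≤ mΩ)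
    (hind : Indep m₁ m₂ μ) {A : Set Ω} (hA : MeasurableSet[m₁] A) {Y D : Ω → ℝ}
    (hY : Measurable[m₁] Y) (hD : Measurable[m₂] D) (hY2 : MemLp Y 2 μ) (hD2 : MemLp D 2 μ)
    (hD0 : ∫ ω, D ω ∂μ = 0) :
    ∫ ω in A, Y ω ^ 2 ∂μ ≤ ∫ ω in A, (Y ω + D ω) ^ 2 ∂μ := by
  have hYD : Integrable (Y * D) μ := hY2.integrable_mul hD2
  have hcross : ∫ ω in A, Y ω * D ω ∂μ = 0 := by
    have hind' := hind.indepFun_of_measurable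
      (show Measurable[m₁] (A.indicator Y) from hY.indicator hA) hD
    rw [← integral_indicator (hm₁ _ hA)]
    simpa [hD0, Set.indicator_mul_left] using
      hind'.integral_mul_eq_mul_integral ((hY2.indicator (hm₁ _ hA)).aestronglyMeasurable)
        hD2.aestronglyMeasurable
  have hexpand : ∫ ω in A, (Y ω + D ω) ^ 2 ∂μ
      = ∫ ω in A, Y ω ^ 2 ∂μ + 2 * ∫ ω in A, Y ω * D ω ∂μ + ∫ ω in A, D ω ^ 2 ∂μ := by
    have hY2' : IntegrableOn (fun ω => Y ω ^ 2) A μ := hY2.integrable_sq.integrableOn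
    have hD2' : IntegrableOn (fun ω => D ω ^ 2) A μ := hD2.integrable_sq.integrableOn
    have hYD' : IntegrableOn (fun ω => 2 * (Y ω * D ω)) A μ := (hYD.const_mul 2).integrableOn
    simp_rw [add_sq', add_assoc, mul_assoc]
    rw [integral_add hY2' (hD2'.fun_add hYD'),
      integral_add hD2' hYD', integral_const_mul]
    ring
  rw [hexpand, hcross, mul_zero, add_zero]
  exact le_add_of_nonneg_right (setIntegral_nonneg (hm₁ _ hA) fun ω _ => sq_nonneg (D ω))

end Independence

section Kolmogorov

variable {mΩ : MeasurableSpace Ω} {μ : Measure Ω} {X : ℕ → Ω → ℝ}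

lemma memLp_partialSum {q : ENNReal} (hX : ∀ j, MemLp (X j) q μ) (i : ℕ) :
    MemLp (partialSum X i) q μ :=
  memLp_finsetSum _ fun j _ => hX j

lemma integral_partialSum_eq_zero (hL1 : ∀ j, Integrable (X j) μ)
    (hcent : ∀ j, ∫ ω, X j ω ∂μ = 0) (i : ℕ) : ∫ ω, partialSum X i ω ∂μ = 0 := by
  unfold partialSum
  rw [integral_finsetSum _ fun j _ => hL1 j]
  exact sum_eq_zero fun j _ => hcent j

lemma sq_mul_measureReal_firstPassage_le [IsProbabilityMeasure μ] (hX : ∀ j, Measurable (X j))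
    (hind : iIndepFun X μ) (hL2 : ∀ j, MemLp (X j) 2 μ) (hcent : ∀ j, ∫ ω, X j ω ∂μ = 0)
    {t : ℝ} (ht : 0 ≤ t) {k n : ℕ} (hk : k ≤ n) :
    t ^ 2 * μ.real (firstPassage (partialSum X) t k) ≤
      ∫ ω in firstPassage (partialSum X) t k, partialSum X n ω ^ 2 ∂μ := by
  have hpast : ∀ i ≤ k, Measurable[blockSigma X (Set.Iio k)] (partialSum X i) := fun i hi =>
    measurable_partialSum fun j hj => measurable_blockSigma (Set.mem_Iio.2 (by omega))
  have hE := measurableSet_firstPassage (t := t) hpast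
  calc t ^ 2 * μ.real (firstPassage (partialSum X) t k)
      ≤ ∫ ω in firstPassage (partialSum X) t k, partialSum X k ω ^ 2 ∂μ := by
        rw [mul_comm, ← smul_eq_mul]
        refine setIntegral_ge_of_const_le (blockSigma_le hX _ _ hE) (measure_ne_top _ _)
          (fun ω hω => ?_) (memLp_partialSum hL2 k).integrable_sq.integrableOn
        rw [← sq_abs (partialSum X k ω)]
        exact pow_le_pow_left₀ ht hω.2.le 2
    _ ≤ ∫ ω in firstPassage (partialSum X) t k,
          (partialSum X k ω + partialSum (fun j => X (k + j)) (n - k) ω) ^ 2 ∂μ :=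
        setIntegral_sq_le_setIntegral_add_sq (blockSigma_le hX _)
          (hind.indep_blockSigma hX (Set.Iio_disjoint_Ici le_rfl)) hE (hpast k le_rfl)
          (measurable_partialSum fun j _ => measurable_blockSigma (by simp))
          (memLp_partialSum hL2 k) (memLp_partialSum (fun j => hL2 (k + j)) _)
          (integral_partialSum_eq_zero (fun j => (hL2 _).integrable one_le_two)
            (fun j => hcent _) _)
    _ = ∫ ω in firstPassage (partialSum X) t k, partialSum X n ω ^ 2 ∂μ := by
        simp_rw [← partialSum_add, Nat.add_sub_cancel' hk]

/-- Kolmogorov's maximal inequality. -/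
theorem measure_lt_maxAbsPartialSum_le [IsProbabilityMeasure μ] (hX : ∀ j, Measurable (X j))
    (hind : iIndepFun X μ) (hL2 : ∀ j, MemLp (X j) 2 μ) (hcent : ∀ j, ∫ ω, X j ω ∂μ = 0) (n : ℕ)
    {t : ℝ} (ht : 0 < t) :
    μ {ω | t < maxAbsPartialSum X n ω} ≤
      ENNReal.ofReal ((∑ j ∈ range n, ∫ ω, X j ω ^ 2 ∂μ) / t ^ 2) := by
  set E := firstPassage (partialSum X) t
  have hE : ∀ k, MeasurableSet (E k) := fun k =>
    measurableSet_firstPassage fun i _ => measurable_partialSum fun j _ => hX j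
  have hdisj : (↑(range (n + 1)) : Set ℕ).PairwiseDisjoint E :=
    pairwise_disjoint_firstPassage.set_pairwise _
  have hsq : ∀ k, IntegrableOn (fun ω => partialSum X n ω ^ 2) (E k) μ := fun k =>
    (memLp_partialSum hL2 n).integrable_sq.integrableOn
  have hreal : t ^ 2 * μ.real {ω | t < maxAbsPartialSum X n ω} ≤
      ∑ j ∈ range n, ∫ ω, X j ω ^ 2 ∂μ := by
    rw [setOf_lt_maxAbsPartialSum_eq_biUnion, measureReal_biUnion_finset hdisj fun k _ => hE k,
      mul_sum]
    calc ∑ k ∈ range (n + 1), t ^ 2 * μ.real (E k)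
        ≤ ∑ k ∈ range (n + 1), ∫ ω in E k, partialSum X n ω ^ 2 ∂μ :=
          sum_le_sum fun k hk => sq_mul_measureReal_firstPassage_le hX hind hL2 hcent ht.le
            (Nat.lt_succ_iff.1 (mem_range.1 hk))
      _ = ∫ ω in ⋃ k ∈ range (n + 1), E k, partialSum X n ω ^ 2 ∂μ :=
          (integral_biUnion_finset _ (fun k _ => hE k) hdisj fun k _ => hsq k).symm
      _ ≤ ∫ ω, partialSum X n ω ^ 2 ∂μ :=
          setIntegral_le_integral (memLp_partialSum hL2 n).integrable_sq
            (.of_forall fun ω => sq_nonneg _)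
      _ = ∑ j ∈ range n, ∫ ω, X j ω ^ 2 ∂μ := integral_sq_sum_of_iIndepFun hind hL2 hcent _
  rw [← ofReal_measureReal]
  exact ENNReal.ofReal_le_ofReal ((le_div_iff₀ (by positivity)).2 (by linarith))

/-- A Hoffmann-Jørgensen type tail inequality. -/
theorem measure_three_mul_lt_maxAbsPartialSum_le [IsProbabilityMeasure μ]
    (hX : ∀ j, Measurable (X j)) (hind : iIndepFun X μ) (hL2 : ∀ j, MemLp (X j) 2 μ)
    (hcent : ∀ j, ∫ ω, X j ω ∂μ = 0) (n : ℕ) {t : ℝ} (ht : 0 < t) :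
    μ {ω | 3 * t < maxAbsPartialSum X n ω} ≤ μ {ω | t < maxAbs X n ω} +
      ENNReal.ofReal ((∑ j ∈ range n, ∫ ω, X j ω ^ 2 ∂μ) / t ^ 2) *
        μ {ω | t < maxAbsPartialSum X n ω} := by
  set c := ENNReal.ofReal ((∑ j ∈ range n, ∫ ω, X j ω ^ 2 ∂μ) / t ^ 2)
  set E := firstPassage (partialSum X) t
  set K : ℕ → Set Ω := fun k => {ω | t < maxAbsPartialSum (fun j => X (k + j)) (n - k) ω}
  have hincl : {ω | 3 * t < maxAbsPartialSum X n ω} ⊆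
      {ω | t < maxAbs X n ω} ∪ ⋃ k ∈ range (n + 1), E k ∩ K k := by
    intro ω hω
    obtain ⟨m, hm, hmω⟩ := lt_maxAbsPartialSum_iff.1 hω
    by_cases hmax : t < maxAbs X n ω
    · exact Or.inl hmax
    obtain ⟨k, hk, hEk, hKk⟩ := exists_firstPassage_of_three_mul_lt ht.le hm
      (fun j hj => (abs_le_maxAbs hj ω).trans (not_lt.1 hmax)) hmω
    exact Or.inr (Set.mem_biUnion (mem_range.2 (Nat.lt_succ_of_le hk)) ⟨hEk, hKk⟩)
  have hEK : ∀ k ≤ n, μ (E k ∩ K k) ≤ μ (E k) * c := by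
    intro k hk
    have hE : MeasurableSet[blockSigma X (Set.Iio k)] (E k) :=
      measurableSet_firstPassage fun i hi =>
        measurable_partialSum fun j hj => measurable_blockSigma (Set.mem_Iio.2 (by omega))
    have hK : MeasurableSet[blockSigma X (Set.Ici k)] (K k) :=
      measurableSet_lt measurable_const
        (measurable_maxAbsPartialSum fun j _ => measurable_blockSigma (by simp))
    rw [(Indep_iff _ _ μ).1 (hind.indep_blockSigma hX (Set.Iio_disjoint_Ici le_rfl)) _ _ hE hK]
    refine mul_le_mul_right ((measure_lt_maxAbsPartialSum_le (fun j => hX _)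
      (hind.precomp (add_right_injective k)) (fun j => hL2 _) (fun j => hcent _) _ ht).trans ?_) _
    exact ENNReal.ofReal_le_ofReal (div_le_div_of_nonneg_right
      (sum_range_shift_le (fun j => integral_nonneg fun ω => sq_nonneg _) hk) (by positivity))
  have hE : ∀ k, MeasurableSet (E k) := fun k =>
    measurableSet_firstPassage fun i _ => measurable_partialSum fun j _ => hX j
  calc μ {ω | 3 * t < maxAbsPartialSum X n ω}
      ≤ μ {ω | t < maxAbs X n ω} + ∑ k ∈ range (n + 1), μ (E k ∩ K k) :=
        (measure_mono hincl).trans ((measure_union_le _ _).trans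
          (add_le_add le_rfl (measure_biUnion_finset_le _ _)))
    _ ≤ μ {ω | t < maxAbs X n ω} + ∑ k ∈ range (n + 1), μ (E k) * c := by
        gcongr with k hk
        exact hEK k (Nat.lt_succ_iff.1 (mem_range.1 hk))
    _ = μ {ω | t < maxAbs X n ω} + c * μ {ω | t < maxAbsPartialSum X n ω} := by
        rw [← sum_mul, mul_comm, setOf_lt_maxAbsPartialSum_eq_biUnion,
          measure_biUnion_finset (pairwise_disjoint_firstPassage.set_pairwise _) fun k _ => hE k]

end Kolmogorov

section Moments

variable {mΩ : MeasurableSpace Ω} {μ : Measure Ω}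

lemma measurable_measure_lt (f : Ω → ℝ) : Measurable fun t : ℝ => μ {ω | t < f ω} :=
  Antitone.measurable fun _ _ hst => measure_mono fun _ hω => hst.trans_lt hω

lemma lintegral_rpow_eq_layercake {f : Ω → ℝ} (hf : Measurable f) (hf0 : 0 ≤ f) {p : ℝ}
    (hp : 0 < p) :
    ∫⁻ ω, ENNReal.ofReal (f ω ^ p) ∂μ =
      ENNReal.ofReal p * ∫⁻ t in Set.Ioi 0, μ {ω | t < f ω} * ENNReal.ofReal (t ^ (p - 1)) :=
  lintegral_rpow_eq_lintegral_meas_lt_mul μ (.of_forall hf0) hf.aemeasurable hp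

lemma measure_lt_div_le_of_measure_lt_le [IsProbabilityMeasure μ] {M Y : Ω → ℝ} {p r c : ℝ}
    (hr : 0 < r) (hc : 0 ≤ c)
    (htail : ∀ t > 0, μ {ω | r * t < M ω} ≤
      μ {ω | t < Y ω} + ENNReal.ofReal (c / t ^ 2) * μ {ω | t < M ω})
    {t : ℝ} (ht : 0 < t) :
    μ {ω | t < M ω / r} ≤ μ {_ω : Ω | t < √(2 * r ^ p * c)} + μ {ω | t < Y ω} +
      ENNReal.ofReal (1 / (2 * r ^ p)) * μ {ω | t < M ω} := by
  simp_rw [lt_div_iff₀' hr]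
  by_cases hts : t < √(2 * r ^ p * c)
  · simp only [hts, Set.ofPred_true, measure_univ]
    exact prob_le_one.trans (le_add_right (le_add_right le_rfl))
  refine (htail t ht).trans (add_le_add (le_add_left le_rfl) (mul_le_mul_left ?_ _))
  have hrp : 0 < r ^ p := Real.rpow_pos_of_pos hr p
  refine ENNReal.ofReal_le_ofReal ((div_le_div_iff₀ (by positivity) (by positivity)).2 ?_)
  have : 2 * r ^ p * c ≤ t ^ 2 := by
    rw [← Real.sq_sqrt (by positivity : 0 ≤ 2 * r ^ p * c)]
    exact pow_le_pow_left₀ (Real.sqrt_nonneg _) (not_lt.1 hts) 2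
  linarith

lemma lintegral_div_rpow_le_of_measure_lt_le [IsProbabilityMeasure μ] {M Y : Ω → ℝ}
    (hM : Measurable M) (hM0 : 0 ≤ M) (hY : Measurable Y) (hY0 : 0 ≤ Y) {p r c : ℝ} (hp : 0 < p)
    (hr : 0 < r) (hc : 0 ≤ c)
    (htail : ∀ t > 0, μ {ω | r * t < M ω} ≤
      μ {ω | t < Y ω} + ENNReal.ofReal (c / t ^ 2) * μ {ω | t < M ω}) :
    ∫⁻ ω, ENNReal.ofReal ((M ω / r) ^ p) ∂μ ≤ ENNReal.ofReal (√(2 * r ^ p * c) ^ p) +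
      ∫⁻ ω, ENNReal.ofReal (Y ω ^ p) ∂μ +
        ENNReal.ofReal (1 / (2 * r ^ p)) * ∫⁻ ω, ENNReal.ofReal (M ω ^ p) ∂μ := by
  have hw : ∀ f : Ω → ℝ,
      Measurable fun t : ℝ => μ {ω | t < f ω} * ENNReal.ofReal (t ^ (p - 1)) :=
    fun f => (measurable_measure_lt f).mul (by fun_prop)
  have hconst : ENNReal.ofReal (√(2 * r ^ p * c) ^ p) =
      ∫⁻ _ω, ENNReal.ofReal (√(2 * r ^ p * c) ^ p) ∂μ := by simp
  rw [hconst, lintegral_rpow_eq_layercake (hM.div_const r) (fun ω => div_nonneg (hM0 ω) hr.le) hp,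
    lintegral_rpow_eq_layercake measurable_const (fun _ => Real.sqrt_nonneg _) hp,
    lintegral_rpow_eq_layercake hY hY0 hp, lintegral_rpow_eq_layercake hM hM0 hp, mul_left_comm,
    ← mul_add, ← mul_add]
  gcongr
  refine (setLIntegral_mono' measurableSet_Ioi fun t ht =>
    mul_le_mul_left (measure_lt_div_le_of_measure_lt_le (p := p) hr hc htail ht) _).trans
    (le_of_eq ?_)
  simp_rw [add_mul, mul_assoc (ENNReal.ofReal (1 / (2 * r ^ p)))]
  rw [lintegral_add_right _ ((hw M).const_mul _), lintegral_add_right _ (hw Y),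
    lintegral_const_mul _ (hw M)]

/-- Good-λ argument: above the threshold `√(2 r ^ p c)` the tail inequality bounds `E[M ^ p]`
by `E[Y ^ p]` plus half of itself. -/
theorem lintegral_rpow_le_of_measure_lt_le [IsProbabilityMeasure μ] {M Y : Ω → ℝ}
    (hM : Measurable M) (hM0 : 0 ≤ M) (hY : Measurable Y) (hY0 : 0 ≤ Y) {p r c : ℝ} (hp : 0 < p)
    (hr : 0 < r) (hc : 0 ≤ c) (hfin : ∫⁻ ω, ENNReal.ofReal (M ω ^ p) ∂μ ≠ ∞)
    (htail : ∀ t > 0, μ {ω | r * t < M ω} ≤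
      μ {ω | t < Y ω} + ENNReal.ofReal (c / t ^ 2) * μ {ω | t < M ω}) :
    ∫⁻ ω, ENNReal.ofReal (M ω ^ p) ∂μ ≤ 2 * (ENNReal.ofReal (r ^ p) *
      (∫⁻ ω, ENNReal.ofReal (Y ω ^ p) ∂μ + ENNReal.ofReal ((2 * r ^ p * c) ^ (p / 2)))) := by
  set L := ∫⁻ ω, ENNReal.ofReal (M ω ^ p) ∂μ
  have hrp : 0 < r ^ p := Real.rpow_pos_of_pos hr p
  have hs : √(2 * r ^ p * c) ^ p = (2 * r ^ p * c) ^ (p / 2) := by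
    rw [Real.sqrt_eq_rpow, ← Real.rpow_mul (by positivity)]
    ring_nf
  have hL : L = ENNReal.ofReal (r ^ p) * ∫⁻ ω, ENNReal.ofReal ((M ω / r) ^ p) ∂μ := by
    rw [← lintegral_const_mul' _ _ ENNReal.ofReal_ne_top]
    refine lintegral_congr fun ω => ?_
    rw [← ENNReal.ofReal_mul hrp.le, Real.div_rpow (hM0 ω) hr.le, mul_div_cancel₀ _ hrp.ne']
  refine ENNReal.le_two_mul_of_le_add_half hfin ?_
  calc L = ENNReal.ofReal (r ^ p) * ∫⁻ ω, ENNReal.ofReal ((M ω / r) ^ p) ∂μ := hL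
    _ ≤ ENNReal.ofReal (r ^ p) * (ENNReal.ofReal (√(2 * r ^ p * c) ^ p) +
        ∫⁻ ω, ENNReal.ofReal (Y ω ^ p) ∂μ + ENNReal.ofReal (1 / (2 * r ^ p)) * L) := by
        gcongr
        exact lintegral_div_rpow_le_of_measure_lt_le hM hM0 hY hY0 hp hr hc htail
    _ = ENNReal.ofReal (r ^ p) * (∫⁻ ω, ENNReal.ofReal (Y ω ^ p) ∂μ +
        ENNReal.ofReal ((2 * r ^ p * c) ^ (p / 2))) + L / 2 := by
        rw [mul_add, ← mul_assoc, ← ENNReal.ofReal_mul hrp.le, mul_one_div,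
          div_mul_cancel_right₀ hrp.ne', hs, add_comm (ENNReal.ofReal _), ENNReal.div_eq_inv_mul,
          ENNReal.ofReal_inv_of_pos two_pos, ENNReal.ofReal_ofNat]

theorem integral_rpow_le_of_measure_lt_le [IsProbabilityMeasure μ] {M Y : Ω → ℝ}
    (hM : Measurable M) (hM0 : 0 ≤ M) (hY : Measurable Y) (hY0 : 0 ≤ Y) {p r c : ℝ} (hp : 0 < p)
    (hr : 0 < r) (hc : 0 ≤ c) (hMp : Integrable (fun ω => M ω ^ p) μ)
    (hYp : Integrable (fun ω => Y ω ^ p) μ)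
    (htail : ∀ t > 0, μ {ω | r * t < M ω} ≤
      μ {ω | t < Y ω} + ENNReal.ofReal (c / t ^ 2) * μ {ω | t < M ω}) :
    ∫ ω, M ω ^ p ∂μ ≤ 2 * r ^ p * (∫ ω, Y ω ^ p ∂μ + (2 * r ^ p * c) ^ (p / 2)) := by
  have hYp0 : 0 ≤ fun ω => Y ω ^ p := fun ω => Real.rpow_nonneg (hY0 ω) p
  have hmom := lintegral_rpow_le_of_measure_lt_le hM hM0 hY hY0 hp hr hc
    hMp.lintegral_lt_top.ne htail
  rw [← ofReal_integral_eq_lintegral_ofReal hYp (.of_forall hYp0),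
    ← ENNReal.ofReal_add (integral_nonneg hYp0) (by positivity),
    ← ENNReal.ofReal_mul (by positivity), ← ENNReal.ofReal_ofNat 2,
    ← ENNReal.ofReal_mul zero_le_two, ← mul_assoc] at hmom
  rw [integral_eq_lintegral_of_nonneg_ae (.of_forall fun ω => Real.rpow_nonneg (hM0 ω) p)
    hMp.aestronglyMeasurable]
  exact ENNReal.toReal_le_of_le_ofReal
    (mul_nonneg (by positivity) (add_nonneg (integral_nonneg hYp0) (by positivity))) hmom

end Moments

section Rosenthal

variable {mΩ : MeasurableSpace Ω} {μ : Measure Ω} {f : ℕ → Ω → ℝ} {p : ℝ}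

lemma integrable_iSup_abs_rpow (hf : ∀ i, Measurable (f i))
    (hfp : ∀ i, Integrable (fun ω => |f i ω| ^ p) μ) (hp : 0 < p) (n : ℕ) :
    Integrable (fun ω => (⨆ i : Fin n, |f i ω|) ^ p) μ := by
  refine (integrable_finsetSum (range n) fun i _ => hfp i).mono'
    ((Measurable.iSup fun i : Fin n => (hf i).abs).pow_const p).aestronglyMeasurable
    (.of_forall fun ω => ?_)
  rw [Real.norm_of_nonneg (Real.rpow_nonneg (Real.iSup_nonneg fun _ => abs_nonneg _) p)]
  exact iSup_fin_rpow_le_sum_range (fun i => abs_nonneg (f i ω)) hp n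

lemma integral_iSup_abs_rpow_le (hfp : ∀ i, Integrable (fun ω => |f i ω| ^ p) μ) (hp : 0 < p)
    (n : ℕ) :
    ∫ ω, (⨆ i : Fin n, |f i ω|) ^ p ∂μ ≤ ∑ i ∈ range n, ∫ ω, |f i ω| ^ p ∂μ := by
  rw [← integral_finsetSum _ fun i _ => hfp i]
  exact integral_mono_of_nonneg
    (.of_forall fun ω => Real.rpow_nonneg (Real.iSup_nonneg fun _ => abs_nonneg _) p)
    (integrable_finsetSum _ fun i _ => hfp i)
    (.of_forall fun ω => iSup_fin_rpow_le_sum_range (fun i => abs_nonneg (f i ω)) hp n)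

theorem integral_maxAbsPartialSum_rpow_le [IsProbabilityMeasure μ] {X : ℕ → Ω → ℝ} (hp : 2 ≤ p)
    (hX : ∀ j, Measurable (X j)) (hind : iIndepFun X μ)
    (hmem : ∀ j, MemLp (X j) (ENNReal.ofReal p) μ) (hcent : ∀ j, ∫ ω, X j ω ∂μ = 0) (n : ℕ) :
    ∫ ω, maxAbsPartialSum X n ω ^ p ∂μ ≤ 2 * 3 ^ p * (1 + (2 * 3 ^ p) ^ (p / 2)) *
      ((∑ j ∈ range n, ∫ ω, |X j ω| ^ p ∂μ) + (∑ j ∈ range n, ∫ ω, X j ω ^ 2 ∂μ) ^ (p / 2)) := by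
  have hp0 : 0 < p := by linarith
  have hL2 : ∀ j, MemLp (X j) 2 μ := fun j =>
    (hmem j).mono_exponent (by simpa using ENNReal.ofReal_le_ofReal hp)
  set A := ∑ j ∈ range n, ∫ ω, |X j ω| ^ p ∂μ
  set V := ∑ j ∈ range n, ∫ ω, X j ω ^ 2 ∂μ
  have hV : 0 ≤ V := sum_nonneg fun j _ => integral_nonneg fun ω => sq_nonneg _
  have hXp : ∀ j, Integrable (fun ω => |X j ω| ^ p) μ := fun j =>
    (hmem j).integrable_abs_rpow hp0
  have hMp : Integrable (fun ω => maxAbsPartialSum X n ω ^ p) μ :=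
    integrable_iSup_abs_rpow (fun i => measurable_partialSum fun j _ => hX j)
      (fun i => (memLp_partialSum hmem i).integrable_abs_rpow hp0) hp0 (n + 1)
  have hYp : Integrable (fun ω => maxAbs X n ω ^ p) μ := integrable_iSup_abs_rpow hX hXp hp0 n
  have hAV : ∫ ω, maxAbs X n ω ^ p ∂μ + (2 * 3 ^ p * V) ^ (p / 2) ≤
      (1 + (2 * 3 ^ p) ^ (p / 2)) * (A + V ^ (p / 2)) := by
    have hA : 0 ≤ A := sum_nonneg fun j _ => integral_nonneg fun ω => by positivity
    have hK : 0 ≤ (2 * 3 ^ p) ^ (p / 2) * A + V ^ (p / 2) := by positivity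
    have hI : ∫ ω, maxAbs X n ω ^ p ∂μ ≤ A := integral_iSup_abs_rpow_le hXp hp0 n
    rw [Real.mul_rpow (by positivity) hV]
    linarith
  calc ∫ ω, maxAbsPartialSum X n ω ^ p ∂μ
      ≤ 2 * 3 ^ p * (∫ ω, maxAbs X n ω ^ p ∂μ + (2 * 3 ^ p * V) ^ (p / 2)) :=
        integral_rpow_le_of_measure_lt_le (measurable_maxAbsPartialSum fun j _ => hX j)
          (maxAbsPartialSum_nonneg X n) (measurable_maxAbs hX) (maxAbs_nonneg X n) hp0 three_pos
          hV hMp hYp fun t ht => measure_three_mul_lt_maxAbsPartialSum_le hX hind hL2 hcent n ht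
    _ ≤ 2 * 3 ^ p * ((1 + (2 * 3 ^ p) ^ (p / 2)) * (A + V ^ (p / 2))) := by gcongr
    _ = _ := by ring

end Rosenthal

end ProbabilityTheory

/-- Rosenthal-type maximal inequality: for independent centered random variables with
finite `p`-th moments (`p ≥ 2`), there is a constant `C_p` depending only on `p` such that
`E[max_{k≤n} |S_k|^p] ≤ C_p (Σ E|X_k|^p + (Σ E[X_k²])^{p/2})`. -/
theorem rosenthal_maximal_inequality (p : ℝ) (hp : 2 ≤ p) :
    ∃ C : ℝ, 0 < C ∧
      ∀ (Ω : Type) (_ : MeasurableSpace Ω) (μ : Measure Ω), IsProbabilityMeasure μ →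
      ∀ (n : ℕ) (X : ℕ → Ω → ℝ),
        iIndepFun X μ →
        (∀ k, MemLp (X k) (ENNReal.ofReal p) μ) →
        (∀ k, ∫ ω, X k ω ∂μ = 0) →
        ∫ ω, (⨆ k : Fin (n + 1), |∑ j ∈ Finset.range (k : ℕ), X j ω|) ^ p ∂μ ≤
          C * ((∑ k ∈ Finset.range n, ∫ ω, |X k ω| ^ p ∂μ) +
            (∑ k ∈ Finset.range n, ∫ ω, (X k ω) ^ 2 ∂μ) ^ (p / 2)) := by
  refine ⟨2 * 3 ^ p * (1 + (2 * 3 ^ p) ^ (p / 2)), by positivity, ?_⟩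
  intro Ω _ μ _ n X hind hmem hcent
  -- Both sides only see `X` up to a.e. equality, so we may pass to a measurable modification.
  obtain ⟨Y, hY, hXY⟩ : ∃ Y : ℕ → Ω → ℝ, (∀ k, Measurable (Y k)) ∧ ∀ k, X k =ᵐ[μ] Y k :=
    ⟨fun k => (hmem k).aestronglyMeasurable.mk (X k),
      fun k => (hmem k).aestronglyMeasurable.stronglyMeasurable_mk.measurable,
      fun k => (hmem k).aestronglyMeasurable.ae_eq_mk⟩
  have hcomp : ∀ (g : ℝ → ℝ) k, ∫ ω, g (X k ω) ∂μ = ∫ ω, g (Y k ω) ∂μ := fun g k =>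
    integral_congr_ae ((hXY k).fun_comp g)
  calc ∫ ω, (⨆ k : Fin (n + 1), |∑ j ∈ range (k : ℕ), X j ω|) ^ p ∂μ
      = ∫ ω, maxAbsPartialSum Y n ω ^ p ∂μ :=
        integral_congr_ae ((ae_all_iff.2 hXY).mono fun ω hω => by
          simp only [maxAbsPartialSum, partialSum, hω])
    _ ≤ _ := integral_maxAbsPartialSum_rpow_le hp hY (hind.congr hXY)
        (fun k => (hmem k).ae_eq (hXY k)) (fun k => (hcomp id k).symm.trans (hcent k)) n
    _ = _ := by
        simp only [hcomp (fun x => |x| ^ p), hcomp (fun x => x ^ 2)]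
end

section
/- Let Y₁,…,Yₙ be real numbers and let S̃ₙ be the piecewise linear interpolation on [0,1] of the partial sums of the Yₖ. Then for any b > 0 and any δ > 0, the modulus of continuity of t ↦ S̃ₙ(t)/n satisfies ω_δ(S̃ₙ/n) ≤ 2δb + (1/n) Σ_{k=1}^n (|Yₖ| − b)⁺. -/
/-!
On `[k, k + 1]` the interpolation `x ↦ S̃ₙ(x / n)` has slope `Y (k + 1)`, so it is
`∑ⱼ Y (j + 1) · ramp (x - j)` with `ramp` the clamp to `[0, 1]`. An increment is then
`∑ⱼ Y (j + 1) dⱼ` with `|dⱼ| ≤ 1` and `∑ⱼ |dⱼ| = |v - u|`, and splitting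
`|Y| ≤ b + (|Y| - b)⁺` charges the first part to the length `|v - u|` and the second,
at most once per cell, to the truncated sum.
-/

open Finset

noncomputable section

def ramp (y : ℝ) : ℝ := max 0 (min y 1)

lemma ramp_of_nonpos {y : ℝ} (hy : y ≤ 0) : ramp y = 0 := by
  unfold ramp; grind

lemma ramp_of_one_le {y : ℝ} (hy : 1 ≤ y) : ramp y = 1 := by
  unfold ramp; grind

lemma ramp_of_mem_Icc {y : ℝ} (hy : y ∈ Set.Icc (0 : ℝ) 1) : ramp y = y := by
  unfold ramp; grind

lemma ramp_monotone : Monotone ramp :=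
  fun _ _ h => max_le_max le_rfl (min_le_min_right 1 h)

lemma abs_ramp_sub_ramp_le_one (y z : ℝ) : |ramp y - ramp z| ≤ 1 := by
  unfold ramp; rw [abs_le]; constructor <;> grind

/-- `partialSumInterp Y (n * t)` is `S̃ₙ(t)`. -/
def partialSumInterp (Y : ℕ → ℝ) (x : ℝ) : ℝ :=
  (∑ j ∈ range ⌊x⌋₊, Y (j + 1)) + (x - ⌊x⌋₊) * Y (⌊x⌋₊ + 1)

lemma partialSumInterp_one (x : ℝ) : partialSumInterp (fun _ => 1) x = x := by
  simp [partialSumInterp]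

lemma sum_range_mul_ramp_eq_partialSumInterp (Y : ℕ → ℝ) {x : ℝ} {N : ℕ} (hx : 0 ≤ x)
    (hxN : x ≤ N) :
    ∑ j ∈ range N, Y (j + 1) * ramp (x - j) = partialSumInterp Y x := by
  set k := ⌊x⌋₊
  have hk : (k : ℝ) ≤ x := Nat.floor_le hx
  have hkN : k ≤ N := Nat.floor_le_of_le hxN
  have extend : ∑ j ∈ range N, Y (j + 1) * ramp (x - j) =
      ∑ j ∈ range (N + 1), Y (j + 1) * ramp (x - j) := by
    rw [sum_range_succ, ramp_of_nonpos (by linarith), mul_zero, add_zero]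
  have restrict : ∑ j ∈ range (k + 1), Y (j + 1) * ramp (x - j) =
      ∑ j ∈ range (N + 1), Y (j + 1) * ramp (x - j) := by
    refine sum_subset (range_subset_range.mpr (by omega)) fun j _ hj => ?_
    have hkj : (k : ℝ) + 1 ≤ j := by exact_mod_cast not_lt.mp (mem_range.not.mp hj)
    rw [ramp_of_nonpos (by linarith [Nat.lt_floor_add_one x]), mul_zero]
  rw [extend, ← restrict, sum_range_succ,
    ramp_of_mem_Icc ⟨by linarith, by linarith [Nat.lt_floor_add_one x]⟩, mul_comm (Y _)]
  congr 1
  refine sum_congr rfl fun j hj => ?_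
  have hjk : (j : ℝ) + 1 ≤ k := by exact_mod_cast mem_range.mp hj
  rw [ramp_of_one_le (by linarith), mul_one]

lemma partialSumInterp_sub_eq_sum (Y : ℕ → ℝ) {u v : ℝ} {N : ℕ} (hu : u ∈ Set.Icc (0 : ℝ) N)
    (hv : v ∈ Set.Icc (0 : ℝ) N) :
    partialSumInterp Y v - partialSumInterp Y u =
      ∑ j ∈ range N, Y (j + 1) * (ramp (v - j) - ramp (u - j)) := by
  simp only [mul_sub, sum_sub_distrib,
    sum_range_mul_ramp_eq_partialSumInterp Y hu.1 hu.2,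
    sum_range_mul_ramp_eq_partialSumInterp Y hv.1 hv.2]

lemma sum_abs_ramp_sub_ramp {u v : ℝ} {N : ℕ} (hu : u ∈ Set.Icc (0 : ℝ) N)
    (hv : v ∈ Set.Icc (0 : ℝ) N) :
    ∑ j ∈ range N, |ramp (v - j) - ramp (u - j)| = |v - u| := by
  wlog huv : u ≤ v generalizing u v
  · simpa only [abs_sub_comm] using this hv hu (le_of_not_ge huv)
  have hmono : ∀ j ∈ range N, 0 ≤ ramp (v - j) - ramp (u - j) := fun j _ =>
    sub_nonneg.mpr (ramp_monotone (by linarith))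
  rw [sum_congr rfl fun j hj => abs_of_nonneg (hmono j hj), abs_of_nonneg (sub_nonneg.mpr huv)]
  simpa only [one_mul, partialSumInterp_one] using (partialSumInterp_sub_eq_sum (fun _ => 1) hu hv).symm

lemma abs_sum_mul_le_of_abs_le_one {ι : Type*} (s : Finset ι) (a w : ι → ℝ) (b : ℝ)
    (hw : ∀ i ∈ s, |w i| ≤ 1) :
    |∑ i ∈ s, a i * w i| ≤ b * ∑ i ∈ s, |w i| + ∑ i ∈ s, max (|a i| - b) 0 := by
  rw [mul_sum, ← sum_add_distrib]
  refine (abs_sum_le_sum_abs _ _).trans (sum_le_sum fun i hi => ?_)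
  have hpos : 0 ≤ max (|a i| - b) 0 := le_max_right _ _
  calc |a i * w i| = |a i| * |w i| := abs_mul _ _
    _ ≤ (b + max (|a i| - b) 0) * |w i| := by
        gcongr; exact le_add_of_sub_left_le (le_max_left _ _)
    _ ≤ b * |w i| + max (|a i| - b) 0 := by
        rw [add_mul]; gcongr; exact mul_le_of_le_one_right hpos (hw i hi)

lemma abs_partialSumInterp_sub_le (Y : ℕ → ℝ) (b : ℝ) {u v : ℝ} {N : ℕ}
    (hu : u ∈ Set.Icc (0 : ℝ) N) (hv : v ∈ Set.Icc (0 : ℝ) N) :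
    |partialSumInterp Y v - partialSumInterp Y u| ≤
      b * |v - u| + ∑ k ∈ range N, max (|Y (k + 1)| - b) 0 := by
  rw [partialSumInterp_sub_eq_sum Y hu hv, ← sum_abs_ramp_sub_ramp hu hv]
  exact abs_sum_mul_le_of_abs_le_one _ _ _ b fun j _ => abs_ramp_sub_ramp_le_one _ _

lemma mul_mem_Icc_zero_natCast {s : ℝ} (hs : s ∈ Set.Icc (0 : ℝ) 1) (n : ℕ) :
    (n : ℝ) * s ∈ Set.Icc (0 : ℝ) n :=
  ⟨by nlinarith [hs.1, n.cast_nonneg (α := ℝ)], by nlinarith [hs.2, n.cast_nonneg (α := ℝ)]⟩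

end

theorem interpolation_modulus_truncation_bound_general (n : ℕ) (hn : 1 ≤ n) (Y : ℕ → ℝ)
    (b δ : ℝ) (hb : 0 < b) :
    ∀ s ∈ Set.Icc (0:ℝ) 1, ∀ t ∈ Set.Icc (0:ℝ) 1, |t - s| < δ →
      |(((∑ j ∈ Finset.range ⌊(n:ℝ) * t⌋₊, Y (j + 1)) +
            ((n:ℝ) * t - ⌊(n:ℝ) * t⌋₊) * Y (⌊(n:ℝ) * t⌋₊ + 1)) / n) -
        (((∑ j ∈ Finset.range ⌊(n:ℝ) * s⌋₊, Y (j + 1)) +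
            ((n:ℝ) * s - ⌊(n:ℝ) * s⌋₊) * Y (⌊(n:ℝ) * s⌋₊ + 1)) / n)| ≤
      2 * δ * b + (1 / n) * ∑ k ∈ Finset.range n, max (|Y (k + 1)| - b) 0 := by
  intro s hs t ht hst
  set S := ∑ k ∈ range n, max (|Y (k + 1)| - b) 0
  have hn0 : (0 : ℝ) < n := by exact_mod_cast hn
  have hδb : 0 ≤ δ * b := mul_nonneg ((abs_nonneg _).trans hst.le) hb.le
  have hinc := abs_partialSumInterp_sub_le Y b
    (mul_mem_Icc_zero_natCast hs n) (mul_mem_Icc_zero_natCast ht n)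
  rw [← mul_sub, abs_mul, Nat.abs_cast] at hinc
  have hlen : b * ((n : ℝ) * |t - s|) ≤ n * (δ * b) := by
    rw [mul_left_comm, mul_comm δ]; gcongr
  calc |partialSumInterp Y (n * t) / n - partialSumInterp Y (n * s) / n|
      = |partialSumInterp Y (n * t) - partialSumInterp Y (n * s)| / n := by
        rw [div_sub_div_same, abs_div, Nat.abs_cast]
    _ ≤ (n * (δ * b) + S) / n := by gcongr; linarith
    _ ≤ 2 * δ * b + 1 / n * S := by
        rw [add_div, mul_div_cancel_left₀ _ hn0.ne', div_eq_mul_one_div S, mul_comm S]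
        linarith

/-- For the piecewise linear interpolation `S̃ₙ` of the partial sums of `Y₁,…,Yₙ`,
the modulus of continuity of `t ↦ S̃ₙ(t)/n` satisfies
`ω_δ(S̃ₙ/n) ≤ 2δb + (1/n) Σ_{k=1}^n (|Y_k| − b)⁺` for any `b > 0`, `δ > 0`. -/
theorem interpolation_modulus_truncation_bound (n : ℕ) (hn : 1 ≤ n) (Y : ℕ → ℝ)
    (b δ : ℝ) (hb : 0 < b) (hδ : 0 < δ) :
    ∀ s ∈ Set.Icc (0:ℝ) 1, ∀ t ∈ Set.Icc (0:ℝ) 1, |t - s| < δ →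
      |(((∑ j ∈ Finset.range ⌊(n:ℝ) * t⌋₊, Y (j + 1)) +
            ((n:ℝ) * t - ⌊(n:ℝ) * t⌋₊) * Y (⌊(n:ℝ) * t⌋₊ + 1)) / n) -
        (((∑ j ∈ Finset.range ⌊(n:ℝ) * s⌋₊, Y (j + 1)) +
            ((n:ℝ) * s - ⌊(n:ℝ) * s⌋₊) * Y (⌊(n:ℝ) * s⌋₊ + 1)) / n)| ≤
      2 * δ * b + (1 / n) * ∑ k ∈ Finset.range n, max (|Y (k + 1)| - b) 0 :=
  interpolation_modulus_truncation_bound_general n hn Y b δ hb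
end

section
/- Let X be a real random variable on a probability space, r > 2, 0 < δ < 1, and x > 0. Then E[|X|^r ∧ x^r] ≤ δ^{r−2} x^{r−2} E[X² ∧ (δx)²] + x^r · P(|X| ≥ δx). Consequently, if x²P(|X| ≥ x) = o(l(x)) as x → ∞ where l(x) = E[X² ∧ x²] is slowly varying, then E[|X|^r ∧ x^r] = o(x^{r−2} l(x)). -/
open MeasureTheory Filter Asymptotics Topology

/-! Split according to whether `|X| ≥ δx`. Below that level `|X|^r ≤ (δx)^{r-2} X²`, and above it
the truncation contributes at most `x^r`; this gives the inequality. Since `l` is nondecreasing,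
`x^r P(|X| ≥ δx) = δ^{-2} x^{r-2} · (δx)² P(|X| ≥ δx) = o(x^{r-2} l(δx)) = o(x^{r-2} l(x))`, so
`E[|X|^r ∧ x^r]` is eventually at most `(δ^{r-2} + o(1)) x^{r-2} l(x)`, and `δ` can be taken
arbitrarily small. -/

theorem min_abs_rpow_le (a : ℝ) {r s x : ℝ} (hr : 2 ≤ r) (hs : 0 ≤ s) :
    min (|a| ^ r) (x ^ r) ≤
      s ^ (r - 2) * min (a ^ 2) (s ^ 2) + if s ≤ |a| then x ^ r else 0 := by
  split_ifs with has
  · have : 0 ≤ s ^ (r - 2) * min (a ^ 2) (s ^ 2) :=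
      mul_nonneg (Real.rpow_nonneg hs _) (le_min (sq_nonneg _) (sq_nonneg _))
    linarith [min_le_right (|a| ^ r) (x ^ r)]
  · replace has := not_le.mp has
    have hmin : min (a ^ 2) (s ^ 2) = a ^ 2 :=
      min_eq_left (sq_le_sq' (abs_lt.mp has).1.le (abs_lt.mp has).2.le)
    calc min (|a| ^ r) (x ^ r) ≤ |a| ^ (r - 2) * |a| ^ (2 : ℝ) := by
          rw [← Real.rpow_add' (abs_nonneg a) (by linarith), sub_add_cancel]
          exact min_le_left _ _
      _ ≤ s ^ (r - 2) * a ^ 2 := by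
          rw [Real.rpow_two, sq_abs]
          gcongr
      _ = s ^ (r - 2) * min (a ^ 2) (s ^ 2) + 0 := by rw [hmin, add_zero]

theorem integrable_min_const_of_nonneg {Ω : Type*} [MeasurableSpace Ω] {μ : Measure Ω}
    [IsFiniteMeasure μ] {f : Ω → ℝ} (hf : Measurable f) (hf0 : ∀ ω, 0 ≤ f ω) (c : ℝ) :
    Integrable (fun ω => min (f ω) c) μ := by
  refine (integrable_const |c|).mono' (hf.min measurable_const).aestronglyMeasurable
    (Eventually.of_forall fun ω => ?_)
  rw [Real.norm_eq_abs]
  rcases le_total (f ω) c with h | h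
  · rw [min_eq_left h, abs_of_nonneg (hf0 ω)]
    exact h.trans (le_abs_self c)
  · rw [min_eq_right h]

theorem integral_min_sq_nonneg {Ω : Type*} [MeasurableSpace Ω] (μ : Measure Ω) (X : Ω → ℝ)
    (t : ℝ) : 0 ≤ ∫ ω, min (X ω ^ 2) (t ^ 2) ∂μ :=
  integral_nonneg fun _ => le_min (sq_nonneg _) (sq_nonneg _)

section TruncatedMoments

variable {Ω : Type*} [MeasurableSpace Ω] {μ : Measure Ω} [IsFiniteMeasure μ]
  {X : Ω → ℝ}

theorem integral_min_abs_rpow_le (hX : Measurable X) {r : ℝ} (hr : 2 ≤ r) {s : ℝ} (hs : 0 ≤ s)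
    (x : ℝ) :
    ∫ ω, min (|X ω| ^ r) (x ^ r) ∂μ ≤
      s ^ (r - 2) * ∫ ω, min (X ω ^ 2) (s ^ 2) ∂μ + x ^ r * μ.real {ω | s ≤ |X ω|} := by
  have hset : MeasurableSet {ω | s ≤ |X ω|} := measurableSet_le measurable_const hX.abs
  have hsq := integrable_min_const_of_nonneg (μ := μ) (hX.pow_const 2) (fun _ => sq_nonneg _)
    (s ^ 2)
  have htail : Integrable ({ω | s ≤ |X ω|}.indicator fun _ => x ^ r) μ :=
    (integrable_const _).indicator hset
  calc ∫ ω, min (|X ω| ^ r) (x ^ r) ∂μ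
      ≤ ∫ ω, (s ^ (r - 2) * min (X ω ^ 2) (s ^ 2) +
          {ω | s ≤ |X ω|}.indicator (fun _ => x ^ r) ω) ∂μ := by
        refine integral_mono (integrable_min_const_of_nonneg (hX.abs.pow_const r)
          (fun _ => Real.rpow_nonneg (abs_nonneg _) r) _) ((hsq.const_mul _).add htail)
          fun ω => ?_
        simpa [Set.indicator_apply] using min_abs_rpow_le (X ω) (x := x) hr hs
    _ = s ^ (r - 2) * ∫ ω, min (X ω ^ 2) (s ^ 2) ∂μ + x ^ r * μ.real {ω | s ≤ |X ω|} := by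
        rw [integral_add (hsq.const_mul _) htail, integral_const_mul,
          integral_indicator_const _ hset, smul_eq_mul, mul_comm (μ.real _)]

theorem integral_min_sq_mono (hX : Measurable X) {s t : ℝ} (hs : 0 ≤ s) (hst : s ≤ t) :
    ∫ ω, min (X ω ^ 2) (s ^ 2) ∂μ ≤ ∫ ω, min (X ω ^ 2) (t ^ 2) ∂μ :=
  integral_mono (integrable_min_const_of_nonneg (hX.pow_const 2) (fun _ => sq_nonneg _) _)
    (integrable_min_const_of_nonneg (hX.pow_const 2) (fun _ => sq_nonneg _) _)
    fun _ => min_le_min_left _ (pow_le_pow_left₀ hs hst 2)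

theorem norm_integral_min_abs_rpow_le (hX : Measurable X) {r : ℝ} (hr : 2 ≤ r) {δ x : ℝ}
    (hδ : 0 < δ) (hδ1 : δ ≤ 1) (hx : 0 ≤ x) :
    ‖∫ ω, min (|X ω| ^ r) (x ^ r) ∂μ‖ ≤
      δ ^ (r - 2) * ‖x ^ (r - 2) * ∫ ω, min (X ω ^ 2) (x ^ 2) ∂μ‖ +
        ‖x ^ r * μ.real {ω | δ * x ≤ |X ω|}‖ := by
  have hδx : 0 ≤ δ * x := mul_nonneg hδ.le hx
  rw [Real.norm_of_nonneg (integral_nonneg fun _ =>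
      le_min (Real.rpow_nonneg (abs_nonneg _) r) (Real.rpow_nonneg hx r)),
    Real.norm_of_nonneg (mul_nonneg (Real.rpow_nonneg hx _) (integral_min_sq_nonneg μ X x))]
  calc ∫ ω, min (|X ω| ^ r) (x ^ r) ∂μ
      ≤ (δ * x) ^ (r - 2) * ∫ ω, min (X ω ^ 2) ((δ * x) ^ 2) ∂μ +
          x ^ r * μ.real {ω | δ * x ≤ |X ω|} := integral_min_abs_rpow_le hX hr hδx x
    _ ≤ δ ^ (r - 2) * (x ^ (r - 2) * ∫ ω, min (X ω ^ 2) (x ^ 2) ∂μ) +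
          ‖x ^ r * μ.real {ω | δ * x ≤ |X ω|}‖ := by
        rw [Real.mul_rpow hδ.le hx, mul_assoc]
        have hl_mono := integral_min_sq_mono (μ := μ) hX hδx (mul_le_of_le_one_left hx hδ1)
        gcongr
        exact Real.le_norm_self _

theorem rpow_mul_measureReal_abs_ge_isLittleO (hX : Measurable X) (r : ℝ) {δ : ℝ} (hδ : 0 < δ)
    (hδ1 : δ ≤ 1)
    (htail : (fun x => x ^ 2 * μ.real {ω | x ≤ |X ω|}) =o[atTop]
      fun x => ∫ ω, min (X ω ^ 2) (x ^ 2) ∂μ) :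
    (fun x => x ^ r * μ.real {ω | δ * x ≤ |X ω|}) =o[atTop]
      fun x => x ^ (r - 2) * ∫ ω, min (X ω ^ 2) (x ^ 2) ∂μ := by
  have hscaled := htail.comp_tendsto (tendsto_id.const_mul_atTop hδ)
  have hmono : (fun x => ∫ ω, min (X ω ^ 2) ((δ * x) ^ 2) ∂μ) =O[atTop]
      fun x => ∫ ω, min (X ω ^ 2) (x ^ 2) ∂μ := by
    refine IsBigO.of_bound 1 ?_
    filter_upwards [eventually_ge_atTop 0] with x hx
    rw [Real.norm_of_nonneg (integral_min_sq_nonneg μ X _),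
      Real.norm_of_nonneg (integral_min_sq_nonneg μ X _), one_mul]
    exact integral_min_sq_mono hX (by positivity) (mul_le_of_le_one_left hx hδ1)
  refine ((isBigO_refl (fun x : ℝ => x ^ (r - 2)) atTop).mul_isLittleO
    ((hscaled.trans_isBigO hmono).const_mul_left (δ ^ 2)⁻¹)).congr' ?_ EventuallyEq.rfl
  filter_upwards [eventually_gt_atTop 0] with x hx
  have hxr : x ^ r = x ^ (r - 2) * x ^ 2 := by
    rw [← Real.rpow_two, ← Real.rpow_add hx, sub_add_cancel]
  simp only [Function.comp_apply, id]
  rw [hxr, mul_pow]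
  field_simp

end TruncatedMoments

theorem exists_rpow_lt_of_pos {p ε : ℝ} (hp : 0 < p) (hε : 0 < ε) :
    ∃ δ : ℝ, δ ^ p < ε ∧ 0 < δ ∧ δ ≤ 1 := by
  have hsmall : Tendsto (fun δ : ℝ => δ ^ p) (𝓝[>] 0) (𝓝 0) := by
    simpa [Real.zero_rpow hp.ne'] using
      (Real.continuousAt_rpow_const 0 p (Or.inr hp.le)).tendsto.mono_left nhdsWithin_le_nhds
  exact ((hsmall.eventually_lt_const hε).and (Ioc_mem_nhdsGT one_pos)).exists

theorem isLittleO_of_forall_le_add_isLittleO {α : Type*} {l : Filter α} {f g : α → ℝ}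
    (h : ∀ ε > 0, ∃ e : α → ℝ, e =o[l] g ∧ ∀ᶠ x in l, ‖f x‖ ≤ ε * ‖g x‖ + ‖e x‖) :
    f =o[l] g := by
  refine isLittleO_iff.mpr fun ε hε => ?_
  obtain ⟨e, he, hfe⟩ := h (ε / 2) (half_pos hε)
  filter_upwards [hfe, isLittleO_iff.mp he (half_pos hε)] with x hf he
  linarith

/-- `E[|X|^r ∧ x^r] ≤ δ^{r−2} x^{r−2} E[X² ∧ (δx)²] + x^r P(|X| ≥ δx)` for `r > 2`,
`0 < δ < 1`, `x > 0`; consequently, if `x²P(|X| ≥ x) = o(l(x))` with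
`l(x) = E[X² ∧ x²]` slowly varying, then `E[|X|^r ∧ x^r] = o(x^{r−2} l(x))`. -/
theorem truncated_r_moment_bound
    {Ω : Type*} [MeasurableSpace Ω] (μ : Measure Ω) [IsProbabilityMeasure μ]
    (X : Ω → ℝ) (hX : Measurable X) (r : ℝ) (hr : 2 < r)
    (l : ℝ → ℝ) (hl : ∀ x, l x = ∫ ω, min ((X ω) ^ 2) (x ^ 2) ∂μ) :
    (∀ δ x : ℝ, 0 < δ → δ < 1 → 0 < x →
      ∫ ω, min (|X ω| ^ r) (x ^ r) ∂μ ≤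
        δ ^ (r - 2) * x ^ (r - 2) * (∫ ω, min ((X ω) ^ 2) ((δ * x) ^ 2) ∂μ) +
          x ^ r * (μ {ω | δ * x ≤ |X ω|}).toReal) ∧
    ((fun x => x ^ 2 * (μ {ω | x ≤ |X ω|}).toReal) =o[atTop] l →
      (∀ᶠ x in atTop, 0 < l x) →
      (∀ k : ℝ, 0 < k → Tendsto (fun x => l (k * x) / l x) atTop (nhds 1)) →
      (fun x => ∫ ω, min (|X ω| ^ r) (x ^ r) ∂μ) =o[atTop]
        (fun x => x ^ (r - 2) * l x)) := by
  obtain rfl : l = fun x => ∫ ω, min (X ω ^ 2) (x ^ 2) ∂μ := funext hl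
  refine ⟨fun δ x hδ _ hx => ?_, fun htail _ _ => ?_⟩
  · rw [← Real.mul_rpow hδ.le hx.le]
    exact integral_min_abs_rpow_le hX hr.le (mul_nonneg hδ.le hx.le) x
  refine isLittleO_of_forall_le_add_isLittleO fun ε hε => ?_
  obtain ⟨δ, hδε, hδ, hδ1⟩ := exists_rpow_lt_of_pos (sub_pos.mpr hr) hε
  refine ⟨_, rpow_mul_measureReal_abs_ge_isLittleO hX r hδ hδ1 htail, ?_⟩
  filter_upwards [eventually_ge_atTop 0] with x hx
  exact (norm_integral_min_abs_rpow_le hX hr.le hδ hδ1 hx).trans (by gcongr)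
end

section
/- Let Y be a nonnegative real random variable on a probability space with E[Y] < ∞. Then for any b ≥ 0: E[(Y − b)⁺] = ∫_b^∞ P(Y ≥ y) dy. In particular, if x²·P(Y ≥ x) = o(l(x)) as x → ∞ with l slowly varying and positive for large x, then E[(Y − x)⁺] = o(l(x)/x) as x → ∞. -/
/-!
The layer cake formula for `(Y - b)⁺`, shifted by `b`, gives the tail-integral identity.
For the asymptotics, cut `∫_x^∞ P(Y ≥ y) dy` into the dyadic blocks `[2ᵏx, 2ᵏ⁺¹x]`. Since the tail
is antitone, the `k`-th block is at most `2ᵏx · P(Y ≥ 2ᵏx) ≤ ε l(2ᵏx) / 2ᵏx`, and slow variation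
gives `l(2ᵏx) ≤ (3/2)ᵏ l(x)` for large `x`; so the blocks are dominated by the geometric series
`ε (l(x)/x) Σ (3/4)ᵏ`.
-/

open MeasureTheory Filter Asymptotics Set Finset

namespace MeasureTheory

variable {α : Type*} [MeasurableSpace α] {μ : Measure α} {f : α → ℝ}

theorem Integrable.max_sub_const_zero (hf : Integrable f μ) {b : ℝ} (hb : 0 ≤ b) :
    Integrable (fun ω => max (f ω - b) 0) μ := by
  refine hf.pos_part.mono
    ((hf.aestronglyMeasurable.sub aestronglyMeasurable_const).sup aestronglyMeasurable_const)
    (ae_of_all _ fun ω => ?_)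
  rw [Real.norm_of_nonneg (le_max_right _ _), Real.norm_of_nonneg (le_max_right _ _)]
  exact max_le_max_right 0 (by linarith)

theorem Integrable.integral_max_sub_eq_integral_Ioi_meas_le (hf : Integrable f μ) {b : ℝ}
    (hb : 0 ≤ b) :
    ∫ ω, max (f ω - b) 0 ∂μ = ∫ y in Ioi b, μ.real {ω | y ≤ f ω} := by
  rw [(hf.max_sub_const_zero hb).integral_eq_integral_meas_le
    (Eventually.of_forall fun _ => le_max_right _ _)]
  calc ∫ t in Ioi 0, μ.real {ω | t ≤ max (f ω - b) 0}
      = ∫ t in Ioi 0, μ.real {ω | t + b ≤ f ω} := by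
        refine setIntegral_congr_fun measurableSet_Ioi fun t (ht : 0 < t) => ?_
        simp only [le_max_iff, le_sub_iff_add_le, not_le.2 ht, or_false]
    _ = ∫ y in Ioi b, μ.real {ω | y ≤ f ω} := by
        simpa only [preimage_add_const_Ioi, sub_self] using
          (measurePreserving_add_right volume b).setIntegral_preimage_emb
            (measurableEmbedding_addRight b) (fun y => μ.real {ω | y ≤ f ω}) (Ioi b)

theorem Integrable.antitoneOn_measureReal_le (hf : Integrable f μ) :
    AntitoneOn (fun y => μ.real {ω | y ≤ f ω}) (Ioi 0) :=
  fun _ hy _ _ hyz => measureReal_mono (fun _ h => hyz.trans h) (hf.measure_ge_lt_top hy).ne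

end MeasureTheory

theorem AntitoneOn.setIntegral_Ioi_le_of_sum_dyadic_le {g : ℝ → ℝ} {a C : ℝ} (ha : 0 < a)
    (hg : AntitoneOn g (Ici a)) (hg0 : ∀ y ∈ Ici a, 0 ≤ g y)
    (hC : ∀ n : ℕ, ∑ k ∈ range n, 2 ^ k * a * g (2 ^ k * a) ≤ C) :
    ∫ y in Ioi a, g y ≤ C := by
  set b : ℕ → ℝ := fun n => 2 ^ n * a
  have hab : ∀ n, a ≤ b n := fun n => le_mul_of_one_le_left ha.le (one_le_pow₀ one_le_two)
  have hb_tendsto : Tendsto b atTop atTop :=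
    (tendsto_pow_atTop_atTop_of_one_lt one_lt_two).atTop_mul_const ha
  have hint : ∀ m n, IntervalIntegrable g volume (b m) (b n) := fun m n =>
    (hg.mono fun y hy => (le_inf (hab m) (hab n)).trans hy.1).intervalIntegrable
  have hbound : ∀ n, ∫ y in a..b n, g y ≤ C := by
    intro n
    have hb0 : b 0 = a := one_mul a
    rw [← hb0, ← intervalIntegral.sum_integral_adjacent_intervals fun k _ => hint k (k + 1)]
    refine (sum_le_sum fun k _ => ?_).trans (hC n)
    have hbk : b k ≤ b (k + 1) := by simp only [b, pow_succ]; nlinarith [hab k]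
    calc ∫ y in b k..b (k + 1), g y ≤ ∫ _ in b k..b (k + 1), g (b k) :=
          intervalIntegral.integral_mono_on hbk (hint k (k + 1)) intervalIntegrable_const
            fun y hy => hg (hab k) ((hab k).trans hy.1) hy.1
      _ = 2 ^ k * a * g (2 ^ k * a) := by
          simp only [intervalIntegral.integral_const, smul_eq_mul, b, pow_succ]; ring
  have hIoi : IntegrableOn g (Ioi a) := by
    refine integrableOn_Ioi_of_intervalIntegral_norm_bounded C a
      (fun n => (hint 0 n).1.mono_set (by simp [b])) hb_tendsto (Eventually.of_forall fun n => ?_)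
    rw [intervalIntegral.integral_congr fun y hy => Real.norm_of_nonneg
      (hg0 y ((le_inf le_rfl (hab n)).trans hy.1))]
    exact hbound n
  exact le_of_tendsto' (intervalIntegral_tendsto_integral_Ioi a hIoi hb_tendsto) hbound

theorem Filter.Eventually.forall_two_pow_mul_atTop {p : ℝ → Prop} (h : ∀ᶠ x in atTop, p x) :
    ∀ᶠ x in atTop, ∀ k : ℕ, p (2 ^ k * x) := by
  obtain ⟨X, hX⟩ := eventually_atTop.1 h
  filter_upwards [eventually_ge_atTop (max X 0)] with x hx k
  exact hX _ ((le_max_left _ _).trans (hx.trans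
    (le_mul_of_one_le_left ((le_max_right _ _).trans hx) (one_le_pow₀ one_le_two))))

theorem eventually_forall_le_pow_mul_of_tendsto_div {l : ℝ → ℝ} {c : ℝ} (hc : 1 < c)
    (hl : ∀ᶠ x in atTop, 0 < l x) (h2 : Tendsto (fun x => l (2 * x) / l x) atTop (nhds 1)) :
    ∀ᶠ x in atTop, ∀ k : ℕ, l (2 ^ k * x) ≤ c ^ k * l x := by
  have hstep : ∀ᶠ x in atTop, l (2 * x) ≤ c * l x := by
    filter_upwards [h2.eventually (eventually_le_nhds hc), hl] with x hx hlx
    exact (div_le_iff₀ hlx).1 hx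
  filter_upwards [hstep.forall_two_pow_mul_atTop] with x hx k
  induction k with
  | zero => simp
  | succ k ih =>
    calc l (2 ^ (k + 1) * x) = l (2 * (2 ^ k * x)) := by ring_nf
      _ ≤ c * l (2 ^ k * x) := hx k
      _ ≤ c * (c ^ k * l x) := by gcongr
      _ = c ^ (k + 1) * l x := by ring

theorem two_pow_mul_mul_le_of_sq_mul_le {l : ℝ → ℝ} {x t δ : ℝ} {k : ℕ} (hx : 0 < x)
    (hδ : 0 ≤ δ) (ht : (2 ^ k * x) ^ 2 * t ≤ δ * l (2 ^ k * x))
    (hl : l (2 ^ k * x) ≤ (3 / 2) ^ k * l x) :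
    2 ^ k * x * t ≤ δ * (l x / x) * (3 / 4) ^ k := by
  have hy : 0 < 2 ^ k * x := by positivity
  calc 2 ^ k * x * t ≤ δ * ((3 / 2) ^ k * l x) / (2 ^ k * x) := by
        rw [le_div_iff₀ hy]
        nlinarith [mul_le_mul_of_nonneg_left hl hδ]
    _ = δ * (l x / x) * (3 / 4) ^ k := by
        rw [div_pow, div_pow, show (4 : ℝ) ^ k = 2 ^ k * 2 ^ k by rw [← mul_pow]; norm_num]
        field_simp

theorem expectation_positive_part_tail_integral_general
    {Ω : Type*} [MeasurableSpace Ω] (μ : Measure Ω)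
    (Y : Ω → ℝ)
    (hint : Integrable Y μ) :
    (∀ b : ℝ, 0 ≤ b →
      ∫ ω, max (Y ω - b) 0 ∂μ = ∫ y in Set.Ioi b, (μ {ω | y ≤ Y ω}).toReal) ∧
    (∀ l : ℝ → ℝ,
      (fun x => x ^ 2 * (μ {ω | x ≤ Y ω}).toReal) =o[atTop] l →
      (∀ᶠ x in atTop, 0 < l x) →
      (∀ k : ℝ, 0 < k → Tendsto (fun x => l (k * x) / l x) atTop (nhds 1)) →
      (fun x => ∫ ω, max (Y ω - x) 0 ∂μ) =o[atTop] (fun x => l x / x)) := by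
  simp only [← measureReal_def]
  refine ⟨fun b => hint.integral_max_sub_eq_integral_Ioi_meas_le, fun l ho hlpos hslow => ?_⟩
  refine isLittleO_iff.2 fun ε hε => ?_
  have htail : ∀ᶠ x in atTop, x ^ 2 * μ.real {ω | x ≤ Y ω} ≤ ε / 4 * l x := by
    filter_upwards [ho.def (by positivity : 0 < ε / 4), hlpos] with x hx hlx
    rw [Real.norm_of_nonneg hlx.le] at hx
    exact (le_abs_self _).trans hx
  filter_upwards [htail.forall_two_pow_mul_atTop, hlpos, eventually_gt_atTop 0,
    eventually_forall_le_pow_mul_of_tendsto_div (by norm_num : (1 : ℝ) < 3 / 2) hlpos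
      (hslow 2 two_pos)] with x htx hlx hx hlgrowth
  rw [Real.norm_of_nonneg (integral_nonneg fun ω => le_max_right (Y ω - x) 0),
    Real.norm_of_nonneg (div_pos hlx hx).le, hint.integral_max_sub_eq_integral_Ioi_meas_le hx.le]
  refine (hint.antitoneOn_measureReal_le.mono fun y (hy : x ≤ y) => hx.trans_le hy)
    |>.setIntegral_Ioi_le_of_sum_dyadic_le hx (fun _ _ => measureReal_nonneg) fun n => ?_
  calc ∑ k ∈ range n, 2 ^ k * x * μ.real {ω | 2 ^ k * x ≤ Y ω}
      ≤ ∑ k ∈ range n, ε / 4 * (l x / x) * (3 / 4) ^ k := sum_le_sum fun k _ =>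
        two_pow_mul_mul_le_of_sq_mul_le hx (by positivity) (htx k) (hlgrowth k)
    _ = ε / 4 * (l x / x) * ∑ k ∈ range n, (3 / 4 : ℝ) ^ k := by rw [mul_sum]
    _ ≤ ε / 4 * (l x / x) * 4 := by
        have hgeom := geom_sum_Ico_le_of_lt_one (m := 0) (n := n) (x := (3 / 4 : ℝ))
          (by norm_num) (by norm_num)
        rw [← range_eq_Ico, show (3 / 4 : ℝ) ^ 0 / (1 - 3 / 4) = 4 by norm_num] at hgeom
        gcongr
    _ = ε * (l x / x) := by ring

/-- For a nonnegative integrable random variable `Y`: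
`E[(Y − b)⁺] = ∫_b^∞ P(Y ≥ y) dy`; in particular, if `x²P(Y ≥ x) = o(l(x))` with `l`
slowly varying and eventually positive, then `E[(Y − x)⁺] = o(l(x)/x)` as `x → ∞`. -/
theorem expectation_positive_part_tail_integral
    {Ω : Type*} [MeasurableSpace Ω] (μ : Measure Ω) [IsProbabilityMeasure μ]
    (Y : Ω → ℝ) (hY : Measurable Y) (hY0 : ∀ ω, 0 ≤ Y ω)
    (hint : Integrable Y μ) :
    (∀ b : ℝ, 0 ≤ b →
      ∫ ω, max (Y ω - b) 0 ∂μ = ∫ y in Set.Ioi b, (μ {ω | y ≤ Y ω}).toReal) ∧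
    (∀ l : ℝ → ℝ,
      (fun x => x ^ 2 * (μ {ω | x ≤ Y ω}).toReal) =o[atTop] l →
      (∀ᶠ x in atTop, 0 < l x) →
      (∀ k : ℝ, 0 < k → Tendsto (fun x => l (k * x) / l x) atTop (nhds 1)) →
      (fun x => ∫ ω, max (Y ω - x) 0 ∂μ) =o[atTop] (fun x => l x / x)) :=
  expectation_positive_part_tail_integral_general μ Y hint
end
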